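/- arXiv:1608.08733 — 2 statements merged into one kernel-verified Lean document; each statement's English description precedes it below -/
import Mathlib

section
/- On the Euclidean space ℝ⁴ with coordinates (x₁,x₂,x₃,x₄), identify x with (z,w) = (x₁+ix₂, x₃+ix₄) ∈ ℂ². Let p, q ∈ ℂ³ satisfy p₁q₃² = q₂(2p₂q₃ − p₃q₂), q₁q₃ = q₂², and p₂q₃ − p₃q₂ ≠ 0. Define, on the open set where the denominator below is nonzero, the function f(x) = [p₁(x₁+ix₂)² − 2p₂(x₁+ix₂)(x₃−ix₄) + p₃(x₃−ix₄)²] / [q₁(x₃+ix₄)² + 2q₂(x₁−ix₂)(x₃+ix₄) + q₃(x₁−ix₂)²]. Then the classical Laplacian Δ of ℝ⁴ satisfies |x|²Δf(x) = −16|x|²(p₂q₃ − p₃q₂)·(q₂(x₁+ix₂) − q₃(x₃−ix₄)) / (q₃(x₁−ix₂) + q₂(x₃+ix₄))³ on that open set. -/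
open scoped BigOperators

/-- Partial derivative in the `i`-th coordinate direction. -/
noncomputable def pd (i : Fin 4) (f : EuclideanSpace ℝ (Fin 4) → ℂ)
    (x : EuclideanSpace ℝ (Fin 4)) : ℂ :=
  deriv (fun t : ℝ => f (x + t • EuclideanSpace.single i (1 : ℝ))) 0

/-- The classical Laplace operator `Δ` on `ℝ⁴`, acting on complex-valued functions. -/
noncomputable def lap (f : EuclideanSpace ℝ (Fin 4) → ℂ)
    (x : EuclideanSpace ℝ (Fin 4)) : ℂ :=
  ∑ i, pd i (pd i f) x

/-- `z = x₁ + i x₂`. -/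
noncomputable def zc (x : EuclideanSpace ℝ (Fin 4)) : ℂ := (x 0 : ℂ) + Complex.I * (x 1 : ℂ)

/-- `w = x₃ + i x₄`. -/
noncomputable def wc (x : EuclideanSpace ℝ (Fin 4)) : ℂ := (x 2 : ℂ) + Complex.I * (x 3 : ℂ)

/-- Numerator `P(x) = p₁(x₁+ix₂)² − 2p₂(x₁+ix₂)(x₃−ix₄) + p₃(x₃−ix₄)²`. -/
noncomputable def num (p : Fin 3 → ℂ) (x : EuclideanSpace ℝ (Fin 4)) : ℂ :=
  p 0 * (zc x) ^ 2 - 2 * p 1 * zc x * star (wc x) + p 2 * (star (wc x)) ^ 2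

/-- Denominator `Q(x) = q₁(x₃+ix₄)² + 2q₂(x₁−ix₂)(x₃+ix₄) + q₃(x₁−ix₂)²`. -/
noncomputable def den (q : Fin 3 → ℂ) (x : EuclideanSpace ℝ (Fin 4)) : ℂ :=
  q 0 * (wc x) ^ 2 + 2 * q 1 * star (zc x) * wc x + q 2 * (star (zc x)) ^ 2

noncomputable def Nm (p : Fin 3 → ℂ) (z d : ℂ) : ℂ := p 0*z^2 - 2*p 1*z*d + p 2*d^2
noncomputable def Dn (q : Fin 3 → ℂ) (b c : ℂ) : ℂ := q 0*c^2 + 2*q 1*b*c + q 2*b^2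

lemma num_eq (p : Fin 3 → ℂ) (x) : num p x = Nm p (zc x) (star (wc x)) := by
  rfl
lemma den_eq (q : Fin 3 → ℂ) (x) : den q x = Dn q (star (zc x)) (wc x) := by
  rfl

-- shift lemmas
lemma shz0 (y : EuclideanSpace ℝ (Fin 4)) (t : ℝ) :
    zc (y + t • EuclideanSpace.single 0 (1:ℝ)) = zc y + 1*(t:ℂ) := by
  simp [zc, EuclideanSpace.single_apply]; ring
lemma shz1 (y : EuclideanSpace ℝ (Fin 4)) (t : ℝ) :
    zc (y + t • EuclideanSpace.single 1 (1:ℝ)) = zc y + Complex.I*(t:ℂ) := by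
  simp [zc, EuclideanSpace.single_apply]; ring
lemma shz2 (y : EuclideanSpace ℝ (Fin 4)) (t : ℝ) :
    zc (y + t • EuclideanSpace.single 2 (1:ℝ)) = zc y + 0*(t:ℂ) := by
  simp [zc, EuclideanSpace.single_apply]
lemma shz3 (y : EuclideanSpace ℝ (Fin 4)) (t : ℝ) :
    zc (y + t • EuclideanSpace.single 3 (1:ℝ)) = zc y + 0*(t:ℂ) := by
  simp [zc, EuclideanSpace.single_apply]
lemma shw0 (y : EuclideanSpace ℝ (Fin 4)) (t : ℝ) :
    wc (y + t • EuclideanSpace.single 0 (1:ℝ)) = wc y + 0*(t:ℂ) := by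
  simp [wc, EuclideanSpace.single_apply]
lemma shw1 (y : EuclideanSpace ℝ (Fin 4)) (t : ℝ) :
    wc (y + t • EuclideanSpace.single 1 (1:ℝ)) = wc y + 0*(t:ℂ) := by
  simp [wc, EuclideanSpace.single_apply]
lemma shw2 (y : EuclideanSpace ℝ (Fin 4)) (t : ℝ) :
    wc (y + t • EuclideanSpace.single 2 (1:ℝ)) = wc y + 1*(t:ℂ) := by
  simp [wc, EuclideanSpace.single_apply]; ring
lemma shw3 (y : EuclideanSpace ℝ (Fin 4)) (t : ℝ) :
    wc (y + t • EuclideanSpace.single 3 (1:ℝ)) = wc y + Complex.I*(t:ℂ) := by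
  simp [wc, EuclideanSpace.single_apply]; ring

lemma star_shift (a u : ℂ) (t : ℝ) : star (a + u*(t:ℂ)) = star a + (star u)*(t:ℂ) := by
  simp [star_add, star_mul', Complex.star_def, Complex.conj_ofReal]

noncomputable def A1 (p q : Fin 3 → ℂ) (u u' v v' z b c d : ℂ) : ℂ :=
  (((2*p 0*z - 2*p 1*d)*u + (2*p 2*d - 2*p 1*z)*v') * Dn q b c
    - Nm p z d * ((2*q 1*c + 2*q 2*b)*u' + (2*q 0*c + 2*q 1*b)*v)) / (Dn q b c)^2

noncomputable def A2 (p q : Fin 3 → ℂ) (u u' v v' z b c d : ℂ) : ℂ :=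
  (((2*p 0*u^2 - 4*p 1*u*v' + 2*p 2*v'^2) * Dn q b c
      - Nm p z d * (2*q 0*v^2 + 4*q 1*u'*v + 2*q 2*u'^2)) * Dn q b c
    - 2 * (((2*p 0*z - 2*p 1*d)*u + (2*p 2*d - 2*p 1*z)*v') * Dn q b c
           - Nm p z d * ((2*q 1*c + 2*q 2*b)*u' + (2*q 0*c + 2*q 1*b)*v))
        * ((2*q 1*c + 2*q 2*b)*u' + (2*q 0*c + 2*q 1*b)*v))
  / (Dn q b c)^3

lemma hasDerivAt_coe : HasDerivAt (fun t : ℝ => (t:ℂ)) 1 0 := by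
  simpa using (hasDerivAt_id (0:ℝ)).ofReal_comp

lemma hlin (z u : ℂ) : HasDerivAt (fun t : ℝ => z + u*(t:ℂ)) u 0 := by
  simpa using (hasDerivAt_coe.const_mul u).const_add z

lemma hNmc (p : Fin 3 → ℂ) (z d u v' : ℂ) :
    HasDerivAt (fun t : ℝ => Nm p (z+u*(t:ℂ)) (d+v'*(t:ℂ)))
      ((2*p 0*z - 2*p 1*d)*u + (2*p 2*d - 2*p 1*z)*v') 0 := by
  have hZ := hlin z u
  have hD := hlin d v'
  have h := (((hZ.mul hZ).const_mul (p 0)).sub (((hZ.mul hD)).const_mul (2*p 1))).add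
    ((hD.mul hD).const_mul (p 2))
  have heq : (fun t : ℝ => Nm p (z+u*(t:ℂ)) (d+v'*(t:ℂ)))
      = fun t : ℝ => p 0 * ((z+u*(t:ℂ)) * (z+u*(t:ℂ))) - 2*p 1 * ((z+u*(t:ℂ)) * (d+v'*(t:ℂ))) + p 2 * ((d+v'*(t:ℂ)) * (d+v'*(t:ℂ))) := by
    funext t; simp only [Nm]; ring
  rw [heq]
  refine h.congr_deriv ?_
  push_cast
  ring

lemma hDnc (q : Fin 3 → ℂ) (b c u' v : ℂ) :
    HasDerivAt (fun t : ℝ => Dn q (b+u'*(t:ℂ)) (c+v*(t:ℂ)))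
      ((2*q 1*c + 2*q 2*b)*u' + (2*q 0*c + 2*q 1*b)*v) 0 := by
  have hB := hlin b u'
  have hC := hlin c v
  have h := (((hC.mul hC).const_mul (q 0)).add (((hB.mul hC)).const_mul (2*q 1))).add
    ((hB.mul hB).const_mul (q 2))
  have heq : (fun t : ℝ => Dn q (b+u'*(t:ℂ)) (c+v*(t:ℂ)))
      = fun t : ℝ => q 0 * ((c+v*(t:ℂ)) * (c+v*(t:ℂ))) + 2*q 1 * ((b+u'*(t:ℂ)) * (c+v*(t:ℂ))) + q 2 * ((b+u'*(t:ℂ)) * (b+u'*(t:ℂ))) := by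
    funext t; simp only [Dn]; ring
  rw [heq]
  refine h.congr_deriv ?_
  push_cast
  ring

lemma core1 (p q : Fin 3 → ℂ) (u u' v v' z b c d : ℂ) (hQ : Dn q b c ≠ 0) :
    HasDerivAt (fun t : ℝ => Nm p (z+u*(t:ℂ)) (d+v'*(t:ℂ)) / Dn q (b+u'*(t:ℂ)) (c+v*(t:ℂ)))
      (A1 p q u u' v v' z b c d) 0 := by
  have hQ0 : Dn q (b+u'*((0:ℝ):ℂ)) (c+v*((0:ℝ):ℂ)) ≠ 0 := by simpa using hQ
  have h := (hNmc p z d u v').div (hDnc q b c u' v) hQ0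
  refine h.congr_deriv ?_
  simp [A1]

lemma core2 (p q : Fin 3 → ℂ) (u u' v v' z b c d : ℂ) (hQ : Dn q b c ≠ 0) :
    HasDerivAt (fun t : ℝ => A1 p q u u' v v' (z+u*(t:ℂ)) (b+u'*(t:ℂ)) (c+v*(t:ℂ)) (d+v'*(t:ℂ)))
      (A2 p q u u' v v' z b c d) 0 := by
  have hQ0 : Dn q (b+u'*((0:ℝ):ℂ)) (c+v*((0:ℝ):ℂ)) ≠ 0 := by simpa using hQ
  have hZ := hlin z u
  have hB := hlin b u'
  have hC := hlin c v
  have hD := hlin d v'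
  have hN := hNmc p z d u v'
  have hQd := hDnc q b c u' v
  have hN' : HasDerivAt (fun t : ℝ =>
      (2*p 0*(z+u*(t:ℂ)) - 2*p 1*(d+v'*(t:ℂ)))*u + (2*p 2*(d+v'*(t:ℂ)) - 2*p 1*(z+u*(t:ℂ)))*v')
      ((2*p 0*u - 2*p 1*v')*u + (2*p 2*v' - 2*p 1*u)*v') 0 :=
    (((hZ.const_mul (2*p 0)).sub (hD.const_mul (2*p 1))).mul_const u).add
      (((hD.const_mul (2*p 2)).sub (hZ.const_mul (2*p 1))).mul_const v')
  have hQ' : HasDerivAt (fun t : ℝ =>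
      (2*q 1*(c+v*(t:ℂ)) + 2*q 2*(b+u'*(t:ℂ)))*u' + (2*q 0*(c+v*(t:ℂ)) + 2*q 1*(b+u'*(t:ℂ)))*v)
      ((2*q 1*v + 2*q 2*u')*u' + (2*q 0*v + 2*q 1*u')*v) 0 :=
    (((hC.const_mul (2*q 1)).add (hB.const_mul (2*q 2))).mul_const u').add
      (((hC.const_mul (2*q 0)).add (hB.const_mul (2*q 1))).mul_const v)
  have hA := (hN'.mul (hDnc q b c u' v)).sub (hN.mul hQ')
  have hQsq := (hDnc q b c u' v).mul (hDnc q b c u' v)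
  have hQsq0 : Dn q (b+u'*((0:ℝ):ℂ)) (c+v*((0:ℝ):ℂ)) * Dn q (b+u'*((0:ℝ):ℂ)) (c+v*((0:ℝ):ℂ)) ≠ 0 :=
    mul_ne_zero hQ0 hQ0
  have h := hA.div hQsq hQsq0
  have heq : (fun t : ℝ => A1 p q u u' v v' (z+u*(t:ℂ)) (b+u'*(t:ℂ)) (c+v*(t:ℂ)) (d+v'*(t:ℂ)))
      = fun t : ℝ =>
      (((2*p 0*(z+u*(t:ℂ)) - 2*p 1*(d+v'*(t:ℂ)))*u + (2*p 2*(d+v'*(t:ℂ)) - 2*p 1*(z+u*(t:ℂ)))*v')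
         * Dn q (b+u'*(t:ℂ)) (c+v*(t:ℂ))
       - Nm p (z+u*(t:ℂ)) (d+v'*(t:ℂ))
         * ((2*q 1*(c+v*(t:ℂ)) + 2*q 2*(b+u'*(t:ℂ)))*u' + (2*q 0*(c+v*(t:ℂ)) + 2*q 1*(b+u'*(t:ℂ)))*v))
      / (Dn q (b+u'*(t:ℂ)) (c+v*(t:ℂ)) * Dn q (b+u'*(t:ℂ)) (c+v*(t:ℂ))) := by
    funext t; simp only [A1]; rw [sq]
  rw [heq]
  refine h.congr_deriv ?_
  simp only [Pi.mul_apply, Pi.sub_apply, Complex.ofReal_zero, mul_zero, add_zero, A2]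
  field_simp
  ring

lemma pd_first (p q : Fin 3 → ℂ) (i : Fin 4) (u v : ℂ)
    (hz : ∀ (y : EuclideanSpace ℝ (Fin 4)) (t : ℝ),
      zc (y + t • EuclideanSpace.single i (1:ℝ)) = zc y + u*(t:ℂ))
    (hw : ∀ (y : EuclideanSpace ℝ (Fin 4)) (t : ℝ),
      wc (y + t • EuclideanSpace.single i (1:ℝ)) = wc y + v*(t:ℂ))
    (y : EuclideanSpace ℝ (Fin 4)) (hy : den q y ≠ 0) :
    pd i (fun x => num p x / den q x) y
      = A1 p q u (star u) v (star v) (zc y) (star (zc y)) (wc y) (star (wc y)) := by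
  have hQ : Dn q (star (zc y)) (wc y) ≠ 0 := by rw [← den_eq]; exact hy
  have heq : (fun t : ℝ => num p (y + t • EuclideanSpace.single i (1:ℝ))
        / den q (y + t • EuclideanSpace.single i (1:ℝ)))
      = fun t : ℝ => Nm p (zc y + u*(t:ℂ)) (star (wc y) + (star v)*(t:ℂ))
        / Dn q (star (zc y) + (star u)*(t:ℂ)) (wc y + v*(t:ℂ)) := by
    funext t
    rw [num_eq, den_eq, hz y t, hw y t, star_shift, star_shift]
  show deriv _ 0 = _
  rw [heq]
  exact (core1 p q u (star u) v (star v) _ _ _ _ hQ).deriv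

lemma pd_second (p q : Fin 3 → ℂ) (i : Fin 4) (u v : ℂ)
    (hz : ∀ (y : EuclideanSpace ℝ (Fin 4)) (t : ℝ),
      zc (y + t • EuclideanSpace.single i (1:ℝ)) = zc y + u*(t:ℂ))
    (hw : ∀ (y : EuclideanSpace ℝ (Fin 4)) (t : ℝ),
      wc (y + t • EuclideanSpace.single i (1:ℝ)) = wc y + v*(t:ℂ))
    (x : EuclideanSpace ℝ (Fin 4)) (hx : den q x ≠ 0) :
    pd i (pd i (fun y => num p y / den q y)) x
      = A2 p q u (star u) v (star v) (zc x) (star (zc x)) (wc x) (star (wc x)) := by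
  have hQ : Dn q (star (zc x)) (wc x) ≠ 0 := by rw [← den_eq]; exact hx
  have hdeq : (fun t : ℝ => den q (x + t • EuclideanSpace.single i (1:ℝ)))
      = fun t : ℝ => Dn q (star (zc x) + (star u)*(t:ℂ)) (wc x + v*(t:ℂ)) := by
    funext t; rw [den_eq, hz x t, hw x t, star_shift]
  have hcont : ContinuousAt (fun t : ℝ => den q (x + t • EuclideanSpace.single i (1:ℝ))) 0 := by
    rw [hdeq]; exact (hDnc q _ _ (star u) v).continuousAt
  have hev : ∀ᶠ t in nhds (0:ℝ), den q (x + t • EuclideanSpace.single i (1:ℝ)) ≠ 0 := by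
    apply hcont.eventually_ne
    simpa using hx
  have hEq : (fun t : ℝ => pd i (fun y => num p y / den q y) (x + t • EuclideanSpace.single i (1:ℝ)))
      =ᶠ[nhds (0:ℝ)] fun t : ℝ => A1 p q u (star u) v (star v)
        (zc x + u*(t:ℂ)) (star (zc x) + (star u)*(t:ℂ)) (wc x + v*(t:ℂ)) (star (wc x) + (star v)*(t:ℂ)) := by
    filter_upwards [hev] with t ht
    rw [pd_first p q i u v hz hw _ ht, hz x t, hw x t, star_shift, star_shift]
  show deriv _ 0 = _
  rw [hEq.deriv_eq]
  exact (core2 p q u (star u) v (star v) _ _ _ _ hQ).deriv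
lemma key_sq (q : Fin 3 → ℂ) (h2 : q 0 * q 2 = (q 1)^2) (b c : ℂ) :
    q 2 * Dn q b c = (q 2*b + q 1*c)^2 := by
  simp only [Dn]; linear_combination c^2 * h2

lemma algebra (p q : Fin 3 → ℂ)
    (h1 : p 0 * (q 2) ^ 2 = q 1 * (2 * p 1 * q 2 - p 2 * q 1))
    (h2 : q 0 * q 2 = (q 1) ^ 2)
    (h3 : p 1 * q 2 - p 2 * q 1 ≠ 0)
    (z b c d : ℂ) (hQ : Dn q b c ≠ 0) :
    A2 p q 1 1 0 0 z b c d + A2 p q Complex.I (-Complex.I) 0 0 z b c d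
      + A2 p q 0 0 1 1 z b c d + A2 p q 0 0 Complex.I (-Complex.I) z b c d
    = -16*(p 1*q 2 - p 2*q 1)*(q 1*z - q 2*d)/(q 2*b + q 1*c)^3 := by
  have hq2 : q 2 ≠ 0 := by
    intro h
    apply h3
    have : q 1 ^ 2 = 0 := by rw [← h2, h, mul_zero]
    have hq1 : q 1 = 0 := by simpa [pow_eq_zero_iff] using this
    rw [h, hq1]; ring
  have key := key_sq q h2 b c
  have hE : q 2*b + q 1*c ≠ 0 := by
    intro h
    apply hQ
    have : q 2 * Dn q b c = 0 := by rw [key, h]; ring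
    rcases mul_eq_zero.1 this with h' | h'
    · exact absurd h' hq2
    · exact h'
  -- abbreviations (as plain terms)
  set Q := Dn q b c with hQdef
  set N := Nm p z d with hNdef
  set Na := 2*p 0*z - 2*p 1*d with hNa
  set Nd := 2*p 2*d - 2*p 1*z with hNd
  set Qb := 2*q 1*c + 2*q 2*b with hQb
  set Qc := 2*q 0*c + 2*q 1*b with hQc
  set X := Na*Qb + Nd*Qc with hX
  have hsum : A2 p q 1 1 0 0 z b c d + A2 p q Complex.I (-Complex.I) 0 0 z b c d
      + A2 p q 0 0 1 1 z b c d + A2 p q 0 0 Complex.I (-Complex.I) z b c d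
      = -4 * X / Q^2 := by
    simp only [A2, ← hQdef, ← hNdef, ← hNa, ← hNd, ← hQb, ← hQc]
    rw [← add_div, ← add_div, ← add_div,
      div_eq_div_iff (pow_ne_zero 3 hQ) (pow_ne_zero 2 hQ)]
    linear_combination (Q^2*(2*(Na*Q + N*Qb)*Qb + 2*(Nd*Q + N*Qc)*Qc + 2*p 0*Q^2 - 2*q 2*N*Q
      + 2*p 2*Q^2 - 2*q 0*N*Q)) * Complex.I_sq
  rw [hsum]
  have hkey2 : q 2^2 * X = 4*(p 1*q 2 - p 2*q 1)*(q 1*z - q 2*d)*(q 2*b + q 1*c) := by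
    rw [hX, hNa, hNd, hQb, hQc]
    linear_combination (4*z*(q 1*c + q 2*b)) * h1 + (4*q 2*c*(p 2*d - p 1*z)) * h2
  rw [div_eq_div_iff (pow_ne_zero 2 hQ) (pow_ne_zero 3 hE)]
  apply mul_left_cancel₀ (pow_ne_zero 2 hq2)
  linear_combination (-4*(q 2*b + q 1*c)^3) * hkey2
    + (16*(p 1*q 2 - p 2*q 1)*(q 1*z - q 2*d)*(q 2*Q + (q 2*b + q 1*c)^2)) * key

/-- with `p₁q₃² = q₂(2p₂q₃ − p₃q₂)`, `q₁q₃ = q₂²` and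
`p₂q₃ − p₃q₂ ≠ 0`, the function `f = P/Q` on `ℝ⁴` satisfies
`|x|²Δf = −16|x|²(p₂q₃−p₃q₂)(q₂(x₁+ix₂)−q₃(x₃−ix₄))/(q₃(x₁−ix₂)+q₂(x₃+ix₄))³`
wherever the denominator is nonzero. -/
theorem stmt_4 (p q : Fin 3 → ℂ)
    (h1 : p 0 * (q 2) ^ 2 = q 1 * (2 * p 1 * q 2 - p 2 * q 1))
    (h2 : q 0 * q 2 = (q 1) ^ 2)
    (h3 : p 1 * q 2 - p 2 * q 1 ≠ 0) :
    ∀ x : EuclideanSpace ℝ (Fin 4), den q x ≠ 0 →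
      (‖x‖ : ℂ) ^ 2 * lap (fun y => num p y / den q y) x
        = -16 * (‖x‖ : ℂ) ^ 2 * (p 1 * q 2 - p 2 * q 1)
            * (q 1 * zc x - q 2 * star (wc x))
            / (q 2 * star (zc x) + q 1 * wc x) ^ 3 := by
  intro x hx
  have sI : star Complex.I = -Complex.I := by
    simp [Complex.star_def, Complex.conj_I]
  have hQ : Dn q (star (zc x)) (wc x) ≠ 0 := by rw [← den_eq]; exact hx
  have e0 := pd_second p q 0 1 0 shz0 shw0 x hx
  have e1 := pd_second p q 1 Complex.I 0 shz1 shw1 x hx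
  have e2 := pd_second p q 2 0 1 shz2 shw2 x hx
  have e3 := pd_second p q 3 0 Complex.I shz3 shw3 x hx
  rw [star_one, star_zero] at e0
  rw [sI, star_zero] at e1
  rw [star_one, star_zero] at e2
  rw [sI, star_zero] at e3
  have hlap : lap (fun y => num p y / den q y) x
      = A2 p q 1 1 0 0 (zc x) (star (zc x)) (wc x) (star (wc x))
      + A2 p q Complex.I (-Complex.I) 0 0 (zc x) (star (zc x)) (wc x) (star (wc x))
      + A2 p q 0 0 1 1 (zc x) (star (zc x)) (wc x) (star (wc x))
      + A2 p q 0 0 Complex.I (-Complex.I) (zc x) (star (zc x)) (wc x) (star (wc x)) := by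
    rw [lap, Fin.sum_univ_four, e0, e1, e2, e3]
  rw [hlap, algebra p q h1 h2 h3 (zc x) (star (zc x)) (wc x) (star (wc x)) hQ]
  ring
end

section
/- Let q₂, q₃ ∈ ℂ with (q₂,q₃) ≠ (0,0). The function h : ℝ⁴ → ℂ given by h(x) = (q₂(x₁+ix₂) − q₃(x₃−ix₄)) / (q₃(x₁−ix₂) + q₂(x₃+ix₄))³ is harmonic on the open subset of ℝ⁴ where the denominator is nonzero: Δh = 0 there. -/
open scoped BigOperators

/-! The numerator `L` and the denominator `M` of `h` are `ℝ`-linear, so both are affine along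
every line `x + t v`, and differentiating twice along `v` gives
`∂ᵥ² (L / M ^ k) = (k (k + 1) M(v)² L - 2 k L(v) M(v) M) / M ^ (k + 2)`.
Summed over the coordinate directions `eᵢ` this vanishes, because `(M(eᵢ))ᵢ = (q₃, -i q₃, q₂, i q₂)`
and `(L(eᵢ))ᵢ = (q₂, i q₂, -q₃, i q₃)` are null and orthogonal for the bilinear form `∑ aᵢ bᵢ`. -/

open Filter Topology

section LineDeriv

variable {E : Type*} [AddCommGroup E] [Module ℝ E]

theorem hasDerivAt_affine_div_affine_pow (A B α β : ℂ) (k : ℕ) (hB : B ≠ 0) :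
    HasDerivAt (fun t : ℝ => (A + t * α) / (B + t * β) ^ k)
      ((α * B - k * β * A) / B ^ (k + 1)) 0 := by
  have hline (c γ : ℂ) : HasDerivAt (fun t : ℝ => c + t * γ) γ 0 := by
    simpa using ((hasDerivAt_id (0 : ℝ)).ofReal_comp.mul_const γ).const_add c
  refine ((hline A α).fun_div ((hline B β).fun_pow k)
    (by simpa using pow_ne_zero k hB)).congr_deriv ?_
  rcases k with _ | k
  · simp [hB]
  · simp only [Complex.ofReal_zero, zero_mul, add_zero, Nat.cast_add, Nat.cast_one,
      add_tsub_cancel_right]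
    field_simp
    ring

theorem linearMap_apply_add_smul (L : E →ₗ[ℝ] ℂ) (x v : E) (t : ℝ) :
    L (x + t • v) = L x + t * L v := by
  simp [Complex.real_smul]

theorem lineDeriv_div_pow (L M : E →ₗ[ℝ] ℂ) (k : ℕ) {x : E} (hx : M x ≠ 0) (v : E) :
    lineDeriv ℝ (fun y => L y / M y ^ k) x v
      = (L v * M x - k * M v * L x) / M x ^ (k + 1) := by
  simp only [lineDeriv, linearMap_apply_add_smul]
  exact (hasDerivAt_affine_div_affine_pow _ _ _ _ k hx).deriv

theorem lineDeriv_lineDeriv_div_pow (L M : E →ₗ[ℝ] ℂ) (k : ℕ) {x : E} (hx : M x ≠ 0) (v : E) :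
    lineDeriv ℝ (fun y => lineDeriv ℝ (fun y => L y / M y ^ k) y v) x v
      = (k * (k + 1) * M v ^ 2 * L x - 2 * k * L v * M v * M x) / M x ^ (k + 2) := by
  set L' : E →ₗ[ℝ] ℂ := L v • M - (k * M v) • L
  have hM : ∀ᶠ t : ℝ in 𝓝 0, M (x + t • v) ≠ 0 := by
    have : Continuous fun t : ℝ => M x + t * M v := by fun_prop
    simpa only [linearMap_apply_add_smul] using this.continuousAt.eventually_ne (by simpa using hx)
  have hfirst : (fun t : ℝ => lineDeriv ℝ (fun y => L y / M y ^ k) (x + t • v) v)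
      =ᶠ[𝓝 0] fun t : ℝ => L' (x + t • v) / M (x + t • v) ^ (k + 1) := by
    filter_upwards [hM] with t ht
    rw [lineDeriv_div_pow L M k ht]
    simp [L']
  change deriv _ 0 = _
  rw [hfirst.deriv_eq]
  change lineDeriv ℝ (fun y => L' y / M y ^ (k + 1)) x v = _
  rw [lineDeriv_div_pow L' M (k + 1) hx]
  simp only [L', LinearMap.sub_apply, LinearMap.smul_apply, smul_eq_mul, Nat.cast_add,
    Nat.cast_one]
  field_simp
  ring

theorem sum_lineDeriv_lineDeriv_div_pow_eq_zero {ι : Type*} (s : Finset ι) (v : ι → E)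
    (L M : E →ₗ[ℝ] ℂ) (k : ℕ) (hMM : ∑ i ∈ s, M (v i) ^ 2 = 0)
    (hLM : ∑ i ∈ s, L (v i) * M (v i) = 0) {x : E} (hx : M x ≠ 0) :
    ∑ i ∈ s, lineDeriv ℝ (fun y => lineDeriv ℝ (fun y => L y / M y ^ k) y (v i)) x (v i) = 0 := by
  have hterm (w : E) : k * (k + 1) * M w ^ 2 * L x - 2 * k * L w * M w * M x
      = k * (k + 1) * L x * M w ^ 2 - 2 * k * M x * (L w * M w) := by ring
  simp_rw [lineDeriv_lineDeriv_div_pow L M k hx, ← Finset.sum_div, hterm, Finset.sum_sub_distrib,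
    ← Finset.mul_sum, hMM, hLM]
  simp

end LineDeriv

noncomputable def hNumerator (q₂ q₃ : ℂ) : EuclideanSpace ℝ (Fin 4) →ₗ[ℝ] ℂ where
  toFun y := q₂ * zc y - q₃ * star (wc y)
  map_add' y y' := by
    simp only [zc, wc, PiLp.add_apply, Complex.ofReal_add, star_add, star_mul', Complex.star_def,
      Complex.conj_ofReal, Complex.conj_I]
    ring
  map_smul' c y := by
    simp only [zc, wc, PiLp.smul_apply, smul_eq_mul, Complex.ofReal_mul, star_add, star_mul',
      Complex.star_def, Complex.conj_ofReal, Complex.conj_I, RingHom.id_apply, Complex.real_smul]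
    ring

noncomputable def hDenominator (q₂ q₃ : ℂ) : EuclideanSpace ℝ (Fin 4) →ₗ[ℝ] ℂ where
  toFun y := q₃ * star (zc y) + q₂ * wc y
  map_add' y y' := by
    simp only [zc, wc, PiLp.add_apply, Complex.ofReal_add, star_add, star_mul', Complex.star_def,
      Complex.conj_ofReal, Complex.conj_I]
    ring
  map_smul' c y := by
    simp only [zc, wc, PiLp.smul_apply, smul_eq_mul, Complex.ofReal_mul, star_add, star_mul',
      Complex.star_def, Complex.conj_ofReal, Complex.conj_I, RingHom.id_apply, Complex.real_smul]
    ring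

theorem hNumerator_single (q₂ q₃ : ℂ) (i : Fin 4) :
    hNumerator q₂ q₃ (EuclideanSpace.single i 1)
      = ![q₂, q₂ * Complex.I, -q₃, q₃ * Complex.I] i := by
  fin_cases i <;> simp [hNumerator, zc, wc]

theorem hDenominator_single (q₂ q₃ : ℂ) (i : Fin 4) :
    hDenominator q₂ q₃ (EuclideanSpace.single i 1)
      = ![q₃, -(q₃ * Complex.I), q₂, q₂ * Complex.I] i := by
  fin_cases i <;> simp [hDenominator, zc, wc]

theorem sum_hDenominator_single_sq (q₂ q₃ : ℂ) :
    ∑ i, hDenominator q₂ q₃ (EuclideanSpace.single i 1) ^ 2 = 0 := by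
  simp only [Fin.sum_univ_four, hDenominator_single, Matrix.cons_val]
  linear_combination (q₂ ^ 2 + q₃ ^ 2) * Complex.I_sq

theorem sum_hNumerator_mul_hDenominator_single (q₂ q₃ : ℂ) :
    ∑ i, hNumerator q₂ q₃ (EuclideanSpace.single i 1)
      * hDenominator q₂ q₃ (EuclideanSpace.single i 1) = 0 := by
  simp only [Fin.sum_univ_four, hNumerator_single, hDenominator_single, Matrix.cons_val]
  ring

theorem stmt_6_general (q₂ q₃ : ℂ) :
    ∀ x : EuclideanSpace ℝ (Fin 4),
      q₃ * star (zc x) + q₂ * wc x ≠ 0 →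
      lap (fun y => (q₂ * zc y - q₃ * star (wc y))
        / (q₃ * star (zc y) + q₂ * wc y) ^ 3) x = 0 := fun _ hx =>
  -- `pd i` unfolds to `lineDeriv ℝ · · (EuclideanSpace.single i 1)`
  sum_lineDeriv_lineDeriv_div_pow_eq_zero Finset.univ (fun i => EuclideanSpace.single i 1)
    (hNumerator q₂ q₃) (hDenominator q₂ q₃) 3 (sum_hDenominator_single_sq q₂ q₃)
    (sum_hNumerator_mul_hDenominator_single q₂ q₃) hx

/-- for `(q₂,q₃) ≠ (0,0)`, the function
`h(x) = (q₂(x₁+ix₂) − q₃(x₃−ix₄))/(q₃(x₁−ix₂) + q₂(x₃+ix₄))³` is harmonic on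
the open subset of `ℝ⁴` where its denominator is nonzero. -/
theorem stmt_6 (q₂ q₃ : ℂ) (hq : (q₂, q₃) ≠ (0, 0)) :
    ∀ x : EuclideanSpace ℝ (Fin 4),
      q₃ * star (zc x) + q₂ * wc x ≠ 0 →
      lap (fun y => (q₂ * zc y - q₃ * star (wc y))
        / (q₃ * star (zc y) + q₂ * wc y) ^ 3) x = 0 :=
  stmt_6_general q₂ q₃
end
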